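/- arXiv:1903.11198 — 3 statements merged into one kernel-verified Lean document; each statement's English description precedes it below -/
import Mathlib

section
/- (Theorem 1, identification of degenerate ATEs.) Let (Ω, F, μ) be a probability space, N ≥ 1, and let D : Ω → (Fin N → Bool) be a measurable total treatment assignment vector. For each assignment vector d : Fin N → Bool let Y d : Ω → ℝ be an integrable potential outcome, and define the observed outcome Yobs(ω) = Y (D ω) (ω). Assume the σ-algebra generated by D is independent of the σ-algebra generated by the family (Y d)_{d}. Fix an advertiser j : Fin N and a partial assignment of the other coordinates; let d¹ and d⁰ be the total assignment vectors agreeing with this partial assignment off coordinate j and with d¹(j) = true, d⁰(j) = false. If μ({D = d¹}) > 0 and μ({D = d⁰}) > 0, then E[Yobs | D = d¹] − E[Yobs | D = d⁰] = E[Y d¹ − Y d⁰]; that is, the contrast between the observed-outcome means of j's test and control users who share the same partial treatment assignment identifies the degenerate average treatment effect of j at that state of the world. -/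
/-!
On the event `{D = d}` the observed outcome is `Y d`, and randomization makes that event
independent of `Y d`, so the observed mean on `{D = d}` is the unconditional mean `E[Y d]`.
Subtracting the two instances `d = d¹, d⁰` gives the ATE.
-/

open MeasureTheory ProbabilityTheory

lemma Indep.inv_mul_setIntegral_eq_integral {Ω : Type*} {m mΩ : MeasurableSpace Ω}
    {μ : Measure Ω} [IsFiniteMeasure μ] (hm : m ≤ mΩ) {f : Ω → ℝ}
    (hind : Indep m (MeasurableSpace.comap f inferInstance) μ) (hf : AEMeasurable f μ)
    {A : Set Ω} (hA : MeasurableSet[m] A) (hA0 : μ A ≠ 0) :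
    (μ A).toReal⁻¹ * ∫ ω in A, f ω ∂μ = ∫ ω, f ω ∂μ := by
  have hAreal : μ.real A ≠ 0 := (measureReal_ne_zero_iff (measure_ne_top μ A)).2 hA0
  rw [← measureReal_def, ← inv_mul_cancel_left₀ hAreal (∫ ω, f ω ∂μ)]
  exact congrArg _ (hind.setIntegral_eq_mul (f := id) hm hf hA aestronglyMeasurable_id)

lemma inv_mul_setIntegral_observed_eq_integral
    {Ω β : Type*} [MeasurableSpace Ω] [MeasurableSpace β] [MeasurableSingletonClass β]
    {μ : Measure Ω} [IsFiniteMeasure μ] {D : Ω → β} (hD : Measurable D)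
    {Y : β → Ω → ℝ} (hY : ∀ d, AEMeasurable (Y d) μ)
    {Yobs : Ω → ℝ} (hYobs : ∀ ω, Yobs ω = Y (D ω) ω)
    {d : β} (hpos : μ {ω | D ω = d} ≠ 0)
    (hindep : Indep (MeasurableSpace.comap D inferInstance)
      (⨆ d, MeasurableSpace.comap (Y d) inferInstance) μ) :
    (μ {ω | D ω = d}).toReal⁻¹ * ∫ ω in {ω | D ω = d}, Yobs ω ∂μ = ∫ ω, Y d ω ∂μ := by
  have hA : MeasurableSet[MeasurableSpace.comap D inferInstance] {ω | D ω = d} :=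
    ⟨{d}, measurableSet_singleton d, rfl⟩
  have hconsistency : ∫ ω in {ω | D ω = d}, Yobs ω ∂μ = ∫ ω in {ω | D ω = d}, Y d ω ∂μ :=
    setIntegral_congr_fun (hD (measurableSet_singleton d)) fun ω hω => by rw [hYobs, hω]
  rw [hconsistency]
  exact Indep.inv_mul_setIntegral_eq_integral hD.comap_le
    (indep_of_indep_of_le_right hindep (le_iSup (fun d => MeasurableSpace.comap (Y d) _) d))
    (hY d) hA hpos

theorem degenerate_ate_identified_general
    {Ω : Type*} [MeasurableSpace Ω] (μ : Measure Ω) [IsProbabilityMeasure μ]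
    (N : ℕ)
    (D : Ω → (Fin N → Bool)) (hD : Measurable D)
    (Y : (Fin N → Bool) → Ω → ℝ) (hY : ∀ d, Integrable (Y d) μ)
    (Yobs : Ω → ℝ) (hYobs : ∀ ω, Yobs ω = Y (D ω) ω)
    (hindep :
      Indep (MeasurableSpace.comap D inferInstance)
        (⨆ d : Fin N → Bool, MeasurableSpace.comap (Y d) inferInstance) μ)
    (d1 d0 : Fin N → Bool)
    (hpos1 : 0 < μ {ω | D ω = d1}) (hpos0 : 0 < μ {ω | D ω = d0}) :
    (μ {ω | D ω = d1}).toReal⁻¹ * ∫ ω in {ω | D ω = d1}, Yobs ω ∂μ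
      - (μ {ω | D ω = d0}).toReal⁻¹ * ∫ ω in {ω | D ω = d0}, Yobs ω ∂μ
      = ∫ ω, (Y d1 ω - Y d0 ω) ∂μ := by
  have hYm : ∀ d, AEMeasurable (Y d) μ := fun d => (hY d).aemeasurable
  rw [inv_mul_setIntegral_observed_eq_integral hD hYm hYobs hpos1.ne' hindep,
    inv_mul_setIntegral_observed_eq_integral hD hYm hYobs hpos0.ne' hindep,
    integral_sub (hY d1) (hY d0)]

/-- Theorem 1 (identification of degenerate ATEs): under the parallel experimentation
design, the contrast between the observed-outcome means of advertiser `j`'s test and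
control users who share the same partial treatment assignment identifies the
degenerate average treatment effect `E[Y d¹ - Y d⁰]`. -/
theorem degenerate_ate_identified
    {Ω : Type*} [MeasurableSpace Ω] (μ : Measure Ω) [IsProbabilityMeasure μ]
    (N : ℕ) (hN : 1 ≤ N)
    (D : Ω → (Fin N → Bool)) (hD : Measurable D)
    (Y : (Fin N → Bool) → Ω → ℝ) (hY : ∀ d, Integrable (Y d) μ)
    (Yobs : Ω → ℝ) (hYobs : ∀ ω, Yobs ω = Y (D ω) ω)
    (hindep :
      Indep (MeasurableSpace.comap D inferInstance)
        (⨆ d : Fin N → Bool, MeasurableSpace.comap (Y d) inferInstance) μ)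
    (j : Fin N) (d1 d0 : Fin N → Bool)
    (hagree : ∀ i : Fin N, i ≠ j → d1 i = d0 i)
    (hd1 : d1 j = true) (hd0 : d0 j = false)
    (hpos1 : 0 < μ {ω | D ω = d1}) (hpos0 : 0 < μ {ω | D ω = d0}) :
    (μ {ω | D ω = d1}).toReal⁻¹ * ∫ ω in {ω | D ω = d1}, Yobs ω ∂μ
      - (μ {ω | D ω = d0}).toReal⁻¹ * ∫ ω in {ω | D ω = d0}, Yobs ω ∂μ
      = ∫ ω, (Y d1 ω - Y d0 ω) ∂μ :=
  degenerate_ate_identified_general μ N D hD Y hY Yobs hYobs hindep d1 d0 hpos1 hpos0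
end

section
/- (Theorem 1, within-partition version.) Let (Ω, F, μ) be a probability space, N ≥ 1, D : Ω → (Fin N → Bool) a measurable total treatment assignment vector, and for each d : Fin N → Bool let Y d : Ω → ℝ be an integrable potential outcome with observed outcome Yobs(ω) = Y (D ω) (ω). Let S ∈ F be an event (a target-audience partition) with μ(S) > 0. Assume the σ-algebra generated by D is independent of the σ-algebra generated jointly by S and the family (Y d)_d. Fix j : Fin N and vectors d¹, d⁰ : Fin N → Bool agreeing off coordinate j with d¹(j) = true and d⁰(j) = false. If μ({D = d¹} ∩ S) > 0 and μ({D = d⁰} ∩ S) > 0, then E[Yobs | {D = d¹} ∩ S] − E[Yobs | {D = d⁰} ∩ S] = E[Y d¹ − Y d⁰ | S]; that is, within the partition S, the test-versus-control contrast among users with the same partial treatment assignment identifies the conditional degenerate average treatment effect of j within that partition. -/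
open MeasureTheory ProbabilityTheory

/-!
On `{D = d}` the observed outcome is `Y d`. Since `{D = d}` is independent of both `S` and
`Y d`, the integral of `Y d` over `{D = d} ∩ S` and the measure of `{D = d} ∩ S` both factor
through `μ {D = d}`, which cancels in the conditional mean: `E[Yobs | {D = d} ∩ S] = E[Y d | S]`
for every assignment `d`. Subtracting the cases `d¹` and `d⁰` gives the claim.
-/

theorem setIntegral_eq_measureReal_mul_integral_of_indep {Ω : Type*}
    {m₁ m₂ mΩ : MeasurableSpace Ω} {μ : Measure Ω}
    (hind : Indep m₁ m₂ μ) (hm₁ : m₁ ≤ mΩ) {A : Set Ω} (hA : MeasurableSet[m₁] A)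
    {f : Ω → ℝ} (hfm : Measurable[m₂] f) (hf : AEStronglyMeasurable f μ) :
    ∫ ω in A, f ω ∂μ = μ.real A * ∫ ω, f ω ∂μ := by
  have h1m : Measurable[m₁] (A.indicator (1 : Ω → ℝ)) := measurable_const.indicator hA
  have hindep : A.indicator (1 : Ω → ℝ) ⟂ᵢ[μ] f :=
    (IndepFun_iff_Indep _ _ _).2 (indep_of_indep_of_le hind h1m.comap_le hfm.comap_le)
  calc ∫ ω in A, f ω ∂μ = ∫ ω, (A.indicator (1 : Ω → ℝ) * f) ω ∂μ := by
        rw [← integral_indicator (hm₁ _ hA)]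
        congr 1 with ω
        by_cases hω : ω ∈ A <;> simp [hω]
    _ = μ.real A * ∫ ω, f ω ∂μ := by
        rw [hindep.integral_mul_eq_mul_integral (h1m.mono hm₁ le_rfl).aestronglyMeasurable hf,
          integral_indicator_one (hm₁ _ hA)]

theorem setAverage_observed_inter_eq_setAverage_of_indep {Ω α : Type*}
    {m mΩ : MeasurableSpace Ω} {μ : Measure Ω} [IsFiniteMeasure μ]
    [MeasurableSpace α] [MeasurableSingletonClass α]
    {D : Ω → α} (hD : Measurable D) (hind : Indep (.comap D inferInstance) m μ)
    {S : Set Ω} (hSm : MeasurableSet[m] S) (hS : MeasurableSet S)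
    {Y : α → Ω → ℝ} {d : α} (hYm : Measurable[m] (Y d))
    (hY : AEStronglyMeasurable (Y d) μ)
    (hpos : 0 < μ ({ω | D ω = d} ∩ S)) :
    ⨍ ω in {ω | D ω = d} ∩ S, Y (D ω) ω ∂μ = ⨍ ω in S, Y d ω ∂μ := by
  set A := {ω | D ω = d}
  have hAm : MeasurableSet[.comap D inferInstance] A := ⟨{d}, measurableSet_singleton d, rfl⟩
  have hA : MeasurableSet A := hD (measurableSet_singleton d)
  have hobs : ∫ ω in A ∩ S, Y (D ω) ω ∂μ = ∫ ω in A ∩ S, Y d ω ∂μ :=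
    setIntegral_congr_fun (hA.inter hS) fun ω hω ↦ by rw [show D ω = d from hω.1]
  have hinter : μ.real (A ∩ S) = μ.real A * μ.real S := by
    simp only [measureReal_def, (Indep_iff _ _ _).1 hind A S hAm hSm, ENNReal.toReal_mul]
  have hA_ne : μ.real A ≠ 0 :=
    left_ne_zero_of_mul (hinter ▸ (measureReal_ne_zero_iff).2 hpos.ne')
  rw [setAverage_eq, setAverage_eq, hobs, ← setIntegral_indicator hS,
    setIntegral_eq_measureReal_mul_integral_of_indep hind hD.comap_le hAm (hYm.indicator hSm)
      (hY.indicator hS), integral_indicator hS, hinter, smul_eq_mul, smul_eq_mul,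
    mul_inv_rev, mul_assoc, inv_mul_cancel_left₀ hA_ne]

theorem degenerate_ate_identified_within_partition_general
    {Ω : Type*} [MeasurableSpace Ω] (μ : Measure Ω) [IsProbabilityMeasure μ]
    (N : ℕ)
    (D : Ω → (Fin N → Bool)) (hD : Measurable D)
    (Y : (Fin N → Bool) → Ω → ℝ) (hY : ∀ d, Integrable (Y d) μ)
    (Yobs : Ω → ℝ) (hYobs : ∀ ω, Yobs ω = Y (D ω) ω)
    (S : Set Ω) (hS : MeasurableSet S)
    (hindep :
      Indep (MeasurableSpace.comap D inferInstance)
        (MeasurableSpace.generateFrom {S}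
          ⊔ ⨆ d : Fin N → Bool, MeasurableSpace.comap (Y d) inferInstance) μ)
    (d1 d0 : Fin N → Bool)
    (hpos1 : 0 < μ ({ω | D ω = d1} ∩ S)) (hpos0 : 0 < μ ({ω | D ω = d0} ∩ S)) :
    (μ ({ω | D ω = d1} ∩ S)).toReal⁻¹ * ∫ ω in {ω | D ω = d1} ∩ S, Yobs ω ∂μ
      - (μ ({ω | D ω = d0} ∩ S)).toReal⁻¹ * ∫ ω in {ω | D ω = d0} ∩ S, Yobs ω ∂μ
      = (μ S).toReal⁻¹ * ∫ ω in S, (Y d1 ω - Y d0 ω) ∂μ := by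
  obtain rfl : Yobs = fun ω ↦ Y (D ω) ω := funext hYobs
  set m := MeasurableSpace.generateFrom {S}
    ⊔ ⨆ d : Fin N → Bool, MeasurableSpace.comap (Y d) inferInstance
  have hSm : MeasurableSet[m] S :=
    le_sup_left (a := MeasurableSpace.generateFrom {S}) _
      (MeasurableSpace.measurableSet_generateFrom rfl)
  have hYm (d : Fin N → Bool) : Measurable[m] (Y d) :=
    (comap_measurable (Y d)).mono (le_sup_of_le_right (le_iSup_of_le d le_rfl)) le_rfl
  have hobs (d : Fin N → Bool) (hpos : 0 < μ ({ω | D ω = d} ∩ S)) :=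
    setAverage_observed_inter_eq_setAverage_of_indep hD hindep hSm hS (hYm d)
      (hY d).aestronglyMeasurable hpos
  simp only [← measureReal_def, ← smul_eq_mul, ← setAverage_eq]
  rw [hobs d1 hpos1, hobs d0 hpos0, setAverage_eq, setAverage_eq, setAverage_eq,
    integral_sub (hY d1).integrableOn (hY d0).integrableOn, smul_sub]

/-- Theorem 1, within-partition version: within a target-audience partition `S`,
the test-versus-control contrast among users with the same partial treatment
assignment identifies the conditional degenerate ATE `E[Y d¹ - Y d⁰ | S]`. -/
theorem degenerate_ate_identified_within_partition
    {Ω : Type*} [MeasurableSpace Ω] (μ : Measure Ω) [IsProbabilityMeasure μ]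
    (N : ℕ) (hN : 1 ≤ N)
    (D : Ω → (Fin N → Bool)) (hD : Measurable D)
    (Y : (Fin N → Bool) → Ω → ℝ) (hY : ∀ d, Integrable (Y d) μ)
    (Yobs : Ω → ℝ) (hYobs : ∀ ω, Yobs ω = Y (D ω) ω)
    (S : Set Ω) (hS : MeasurableSet S) (hSpos : 0 < μ S)
    (hindep :
      Indep (MeasurableSpace.comap D inferInstance)
        (MeasurableSpace.generateFrom {S}
          ⊔ ⨆ d : Fin N → Bool, MeasurableSpace.comap (Y d) inferInstance) μ)
    (j : Fin N) (d1 d0 : Fin N → Bool)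
    (hagree : ∀ i : Fin N, i ≠ j → d1 i = d0 i)
    (hd1 : d1 j = true) (hd0 : d0 j = false)
    (hpos1 : 0 < μ ({ω | D ω = d1} ∩ S)) (hpos0 : 0 < μ ({ω | D ω = d0} ∩ S)) :
    (μ ({ω | D ω = d1} ∩ S)).toReal⁻¹ * ∫ ω in {ω | D ω = d1} ∩ S, Yobs ω ∂μ
      - (μ ({ω | D ω = d0} ∩ S)).toReal⁻¹ * ∫ ω in {ω | D ω = d0} ∩ S, Yobs ω ∂μ
      = (μ S).toReal⁻¹ * ∫ ω in S, (Y d1 ω - Y d0 ω) ∂μ :=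
  degenerate_ate_identified_within_partition_general μ N D hD Y hY Yobs hYobs S hS hindep d1 d0
    hpos1 hpos0
end

section
/- (Corollary 1, identification of prospective ATEs.) Let (Ω, F, μ) be a probability space, N ≥ 1, D : Ω → (Fin N → Bool) a measurable total treatment assignment vector, and for each d : Fin N → Bool let Y d : Ω → ℝ be an integrable potential outcome with observed outcome Yobs(ω) = Y (D ω) (ω). Let S ∈ F with μ(S) > 0 and assume σ(D) is independent of the σ-algebra generated jointly by S and (Y d)_d. Fix j : Fin N, let W denote the finite set of partial assignments w : {i : Fin N // i ≠ j} → Bool, and for each w let w¹ and w⁰ denote the total assignments extending w with coordinate j set to true and false respectively. Let p : W → ℝ be nonnegative weights with ∑_{w ∈ W} p(w) = 1, and suppose μ({D = w¹} ∩ S) > 0 and μ({D = w⁰} ∩ S) > 0 for every w with p(w) > 0. Then the prospective ATE ∑_{w} p(w)·E[Y w¹ − Y w⁰ | S] equals the data functional ∑_{w} p(w)·( E[Yobs | {D = w¹} ∩ S] − E[Yobs | {D = w⁰} ∩ S] ); that is, given beliefs p over the degenerate states of the world, the prospective average treatment effect of j within S is identified. -/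
open MeasureTheory ProbabilityTheory

/-- Extend a partial treatment assignment `w` of the competitors of `j` to a total
assignment by setting coordinate `j` to `b`. -/
def extendAssign {N : ℕ} (j : Fin N) (w : {i : Fin N // i ≠ j} → Bool) (b : Bool) :
    Fin N → Bool :=
  fun i => if h : i = j then b else w ⟨i, h⟩

namespace ProbabilityTheory

variable {Ω : Type*} {mΩ : MeasurableSpace Ω} {μ : Measure Ω} {m₁ m₂ : MeasurableSpace Ω}

lemma Indep.setIntegral_inter_eq_mul (h : Indep m₁ m₂ μ) (hm₁ : m₁ ≤ mΩ) {A S : Set Ω}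
    {g : Ω → ℝ} (hA : MeasurableSet[m₁] A) (hS₂ : MeasurableSet[m₂] S) (hS : MeasurableSet[mΩ] S)
    (hg₂ : Measurable[m₂] g) (hg : AEMeasurable g μ) :
    ∫ ω in A ∩ S, g ω ∂μ = μ.real A * ∫ ω in S, g ω ∂μ := by
  have hindep : Indep m₁ (MeasurableSpace.comap (S.indicator g) inferInstance) μ :=
    indep_of_indep_of_le_right h (hg₂.indicator hS₂).comap_le
  have := hindep.setIntegral_eq_mul (f := id) hm₁ (hg.indicator hS) hA
    aestronglyMeasurable_id
  simpa only [id, setIntegral_indicator hS, integral_indicator hS] using this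

end ProbabilityTheory

section PotentialOutcomes

variable {Ω : Type*} [MeasurableSpace Ω] {μ : Measure Ω} [IsFiniteMeasure μ] {N : ℕ}
  {D : Ω → (Fin N → Bool)} {Y : (Fin N → Bool) → Ω → ℝ} {Yobs : Ω → ℝ} {S : Set Ω}

/-- On `{D = d}` the observed outcome is `Y d`, and independence of `D` from `(S, Y d)` pulls the
same factor `μ {D = d}` out of both the measure and the integral over `{D = d} ∩ S`. -/
lemma setAverage_observed_eq_setAverage_potential (hD : Measurable D)
    (hY : ∀ d, AEMeasurable (Y d) μ) (hYobs : ∀ ω, Yobs ω = Y (D ω) ω) (hS : MeasurableSet S)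
    (hindep :
      Indep (MeasurableSpace.comap D inferInstance)
        (MeasurableSpace.generateFrom {S}
          ⊔ ⨆ d : Fin N → Bool, MeasurableSpace.comap (Y d) inferInstance) μ)
    {d : Fin N → Bool} (hpos : 0 < μ ({ω | D ω = d} ∩ S)) :
    (μ ({ω | D ω = d} ∩ S)).toReal⁻¹ * ∫ ω in {ω | D ω = d} ∩ S, Yobs ω ∂μ
      = (μ S).toReal⁻¹ * ∫ ω in S, Y d ω ∂μ := by
  set A := {ω | D ω = d}
  have hA₁ : MeasurableSet[MeasurableSpace.comap D inferInstance] A :=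
    ⟨{d}, measurableSet_singleton d, rfl⟩
  have hA : MeasurableSet A := hD (measurableSet_singleton d)
  have hS₂ : MeasurableSet[MeasurableSpace.generateFrom {S}
      ⊔ ⨆ d, MeasurableSpace.comap (Y d) inferInstance] S :=
    le_sup_left (a := MeasurableSpace.generateFrom {S}) _
      (MeasurableSpace.measurableSet_generateFrom rfl)
  have hY₂ : Measurable[MeasurableSpace.generateFrom {S}
      ⊔ ⨆ d, MeasurableSpace.comap (Y d) inferInstance] (Y d) :=
    measurable_iff_comap_le.2 ((le_iSup (fun d => MeasurableSpace.comap (Y d) _) d).trans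
      le_sup_right)
  have hobs : ∫ ω in A ∩ S, Yobs ω ∂μ = ∫ ω in A ∩ S, Y d ω ∂μ :=
    setIntegral_congr_fun (hA.inter hS) fun ω hω => by rw [hYobs ω, hω.1]
  have hmeas : μ (A ∩ S) = μ A * μ S := (Indep_iff _ _ _).1 hindep _ _ hA₁ hS₂
  have hA_ne : (μ A).toReal ≠ 0 :=
    ENNReal.toReal_ne_zero.2 ⟨left_ne_zero_of_mul (hmeas ▸ hpos.ne'), measure_ne_top μ A⟩
  rw [hobs, hindep.setIntegral_inter_eq_mul hD.comap_le hA₁ hS₂ hS hY₂ (hY d), hmeas,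
    ENNReal.toReal_mul, measureReal_def]
  field_simp

end PotentialOutcomes

theorem prospective_ate_identified_general
    {Ω : Type*} [MeasurableSpace Ω] (μ : Measure Ω) [IsProbabilityMeasure μ]
    (N : ℕ)
    (D : Ω → (Fin N → Bool)) (hD : Measurable D)
    (Y : (Fin N → Bool) → Ω → ℝ) (hY : ∀ d, Integrable (Y d) μ)
    (Yobs : Ω → ℝ) (hYobs : ∀ ω, Yobs ω = Y (D ω) ω)
    (S : Set Ω) (hS : MeasurableSet S)
    (hindep :
      Indep (MeasurableSpace.comap D inferInstance)
        (MeasurableSpace.generateFrom {S}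
          ⊔ ⨆ d : Fin N → Bool, MeasurableSpace.comap (Y d) inferInstance) μ)
    (j : Fin N)
    (p : ({i : Fin N // i ≠ j} → Bool) → ℝ)
    (hp : ∀ w, 0 ≤ p w)
    (hpos : ∀ w : {i : Fin N // i ≠ j} → Bool, 0 < p w →
      0 < μ ({ω | D ω = extendAssign j w true} ∩ S) ∧
      0 < μ ({ω | D ω = extendAssign j w false} ∩ S)) :
    ∑ w : {i : Fin N // i ≠ j} → Bool,
        p w * ((μ S).toReal⁻¹ *
          ∫ ω in S, (Y (extendAssign j w true) ω - Y (extendAssign j w false) ω) ∂μ)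
      = ∑ w : {i : Fin N // i ≠ j} → Bool,
          p w *
            ((μ ({ω | D ω = extendAssign j w true} ∩ S)).toReal⁻¹ *
                ∫ ω in {ω | D ω = extendAssign j w true} ∩ S, Yobs ω ∂μ
              - (μ ({ω | D ω = extendAssign j w false} ∩ S)).toReal⁻¹ *
                  ∫ ω in {ω | D ω = extendAssign j w false} ∩ S, Yobs ω ∂μ) := by
  refine Finset.sum_congr rfl fun w _ => ?_
  obtain hw | hw := (hp w).eq_or_lt
  · rw [← hw, zero_mul, zero_mul]
  obtain ⟨htreated, hcontrol⟩ := hpos w hw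
  have hYm d := (hY d).aemeasurable
  rw [setAverage_observed_eq_setAverage_potential hD hYm hYobs hS hindep htreated,
    setAverage_observed_eq_setAverage_potential hD hYm hYobs hS hindep hcontrol,
    integral_sub (hY _).integrableOn (hY _).integrableOn, mul_sub]

/-- Corollary 1 (identification of prospective ATEs): given beliefs `p` over the
degenerate states of the world, the prospective ATE of advertiser `j` within the
partition `S` equals the corresponding belief-weighted combination of observed
test-versus-control contrasts, and hence is identified by the data. -/
theorem prospective_ate_identified
    {Ω : Type*} [MeasurableSpace Ω] (μ : Measure Ω) [IsProbabilityMeasure μ]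
    (N : ℕ) (hN : 1 ≤ N)
    (D : Ω → (Fin N → Bool)) (hD : Measurable D)
    (Y : (Fin N → Bool) → Ω → ℝ) (hY : ∀ d, Integrable (Y d) μ)
    (Yobs : Ω → ℝ) (hYobs : ∀ ω, Yobs ω = Y (D ω) ω)
    (S : Set Ω) (hS : MeasurableSet S) (hSpos : 0 < μ S)
    (hindep :
      Indep (MeasurableSpace.comap D inferInstance)
        (MeasurableSpace.generateFrom {S}
          ⊔ ⨆ d : Fin N → Bool, MeasurableSpace.comap (Y d) inferInstance) μ)
    (j : Fin N)
    (p : ({i : Fin N // i ≠ j} → Bool) → ℝ)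
    (hp : ∀ w, 0 ≤ p w) (hpsum : ∑ w : {i : Fin N // i ≠ j} → Bool, p w = 1)
    (hpos : ∀ w : {i : Fin N // i ≠ j} → Bool, 0 < p w →
      0 < μ ({ω | D ω = extendAssign j w true} ∩ S) ∧
      0 < μ ({ω | D ω = extendAssign j w false} ∩ S)) :
    ∑ w : {i : Fin N // i ≠ j} → Bool,
        p w * ((μ S).toReal⁻¹ *
          ∫ ω in S, (Y (extendAssign j w true) ω - Y (extendAssign j w false) ω) ∂μ)
      = ∑ w : {i : Fin N // i ≠ j} → Bool,
          p w *
            ((μ ({ω | D ω = extendAssign j w true} ∩ S)).toReal⁻¹ *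
                ∫ ω in {ω | D ω = extendAssign j w true} ∩ S, Yobs ω ∂μ
              - (μ ({ω | D ω = extendAssign j w false} ∩ S)).toReal⁻¹ *
                  ∫ ω in {ω | D ω = extendAssign j w false} ∩ S, Yobs ω ∂μ) :=
  prospective_ate_identified_general μ N D hD Y hY Yobs hYobs S hS hindep j p hp hpos
end
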